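/- The cyclic subgroup commutativity degree of ℤ₂ × Q_{2^{m+1}} tends to 0 as m → ∞; that is, the real sequence m ↦ N₁(m)/T₁(m)², where N₁(m) is the number of ordered pairs (H,K) of cyclic subgroups of ℤ₂ × Q_{2^{m+1}} with HK = KH and T₁(m) is the number of cyclic subgroups of ℤ₂ × Q_{2^{m+1}}, converges to 0. -/

import Mathlib

open Pointwise

/-- `ℤ₂ × Q_{2^{m+1}}`, the direct product of the cyclic group of order 2 and the generalized
quaternion group of order `2^{m+1}`. -/
abbrev Z2ProdQuaternion (m : ℕ) : Type :=
  Multiplicative (ZMod 2) × QuaternionGroup (2 ^ (m - 1))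

/-- The number of ordered pairs of permuting cyclic subgroups of `ℤ₂ × Q_{2^{m+1}}`. -/
noncomputable def cyclicPermutingPairs (m : ℕ) : ℕ :=
  Nat.card {p : Subgroup (Z2ProdQuaternion m) × Subgroup (Z2ProdQuaternion m) //
    IsCyclic p.1 ∧ IsCyclic p.2 ∧
      (p.1 : Set (Z2ProdQuaternion m)) * (p.2 : Set (Z2ProdQuaternion m)) =
        (p.2 : Set (Z2ProdQuaternion m)) * (p.1 : Set (Z2ProdQuaternion m))}

/-- The number of cyclic subgroups of `ℤ₂ × Q_{2^{m+1}}`. -/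
noncomputable def numCyclicSubgroups (m : ℕ) : ℕ :=
  Nat.card {H : Subgroup (Z2ProdQuaternion m) // IsCyclic H}

/-!
Every cyclic subgroup of `ℤ₂ × Q_{2^{m+1}}` is generated by some `(b, a i)` or some `(b, xa i)`.
A subgroup `⟨(b, a i)⟩` is determined by `b` and the order of `a i`, a divisor of `2^m`, so there
are only `O(m)` of the first kind; they may permute with everything. The `4 · 2^(m-1)` elements
`(b, xa i)` all have order 4, so there are at least `2^(m-1)` cyclic subgroups. Two subgroups
`⟨(b, xa i)⟩` and `⟨(c, xa j)⟩` can only permute if `4 (i - j) = 0`, which leaves at most 8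
partners for each subgroup of the second kind. Hence the number of permuting pairs is `O(m)`
times the number of cyclic subgroups, and the ratio is `O(m / 2^m)`.
-/

open Subgroup Finset QuaternionGroup

local notation "ℤ₂" => Multiplicative (ZMod 2)

theorem Finset.card_rel_le_of_sparse {α : Type*} (s : Finset α) (P : α → Prop)
    [DecidablePred P] (r : α → α → Prop) [DecidableRel r] (c : ℕ)
    (h : ∀ x ∈ s, ¬P x → #{y ∈ s | ¬P y ∧ r x y} ≤ c) :
    #{p ∈ s ×ˢ s | r p.1 p.2} ≤ (2 * #{x ∈ s | P x} + c) * #s := by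
  classical
  have hrow : ∀ x ∈ s,
      #{y ∈ s | r x y} ≤ (if P x then #s else 0) + (#{y ∈ s | P y} + c) := by
    intro x hx
    by_cases hPx : P x
    · simpa [hPx] using le_add_right (card_filter_le s (r x))
    · calc #{y ∈ s | r x y} ≤ #{y ∈ s | P y} + #{y ∈ s | ¬P y ∧ r x y} := by
            rw [← card_union_of_disjoint (disjoint_filter.2 fun _ _ hP hn ↦ hn.1 hP)]
            refine card_le_card fun y hy ↦ ?_
            simp only [mem_filter, mem_union] at hy ⊢
            tauto
        _ ≤ _ := by simpa [hPx] using h x hx hPx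
  calc #{p ∈ s ×ˢ s | r p.1 p.2} = ∑ x ∈ s, #{y ∈ s | r x y} := by
        rw [card_filter, sum_product]
        simp only [card_filter]
    _ ≤ ∑ x ∈ s, ((if P x then #s else 0) + (#{y ∈ s | P y} + c)) := sum_le_sum hrow
    _ = (2 * #{x ∈ s | P x} + c) * #s := by
        rw [sum_add_distrib, ← sum_filter, sum_const, sum_const, smul_eq_mul, smul_eq_mul]
        ring

theorem Nat.card_rel_le_of_sparse {α : Type*} [Finite α] (C P : α → Prop) (r : α → α → Prop)
    (c : ℕ) (h : ∀ x, C x → ¬P x → Nat.card {y // C y ∧ ¬P y ∧ r x y} ≤ c) :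
    Nat.card {p : α × α // C p.1 ∧ C p.2 ∧ r p.1 p.2} ≤
      (2 * Nat.card {x // C x ∧ P x} + c) * Nat.card {x // C x} := by
  classical
  have := Fintype.ofFinite α
  simp only [Nat.card_eq_fintype_card, Fintype.card_subtype] at h ⊢
  have key := Finset.card_rel_le_of_sparse {x | C x} P r c fun x hx hPx ↦ by
    simpa [filter_filter, and_assoc] using h x (by simpa using hx) hPx
  rw [filter_filter] at key
  convert key using 2
  ext p
  simp [and_assoc]

section

variable {G : Type*} [Group G]

theorem zpowers_pow_eq_zpowers_pow_gcd {z : G} (hz : IsOfFinOrder z) (p : ℕ) :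
    zpowers (z ^ p) = zpowers (z ^ (orderOf z).gcd p) := by
  set g := (orderOf z).gcd p with hg_def
  have hg : 0 < g := Nat.gcd_pos_of_pos_left _ hz.orderOf_pos
  obtain ⟨q, hq⟩ := Nat.gcd_dvd_right (orderOf z) p
  have hcop : q.Coprime (orderOf (z ^ g)) := by
    rw [orderOf_pow_of_dvd hg.ne' (Nat.gcd_dvd_left _ _), Nat.coprime_comm]
    have h := Nat.coprime_div_gcd_div_gcd hg
    rwa [← hg_def, hq, Nat.mul_div_cancel_left _ hg] at h
  rw [hq, pow_mul]
  exact le_antisymm (zpowers_le.2 (pow_mem (mem_zpowers _) _))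
    (zpowers_le.2 (mem_zpowers_pow_iff.2 hcop))

theorem zpowers_eq_zpowers_of_orderOf_eq {z x y : G} (hz : IsOfFinOrder z)
    (hx : x ∈ zpowers z) (hy : y ∈ zpowers z) (h : orderOf x = orderOf y) :
    zpowers x = zpowers y := by
  obtain ⟨p, rfl⟩ := (hz.mem_powers_iff_mem_zpowers).2 hx
  obtain ⟨q, rfl⟩ := (hz.mem_powers_iff_mem_zpowers).2 hy
  have hN := hz.orderOf_pos.ne'
  rw [hz.orderOf_pow, hz.orderOf_pow] at h
  have hgcd : (orderOf z).gcd p = (orderOf z).gcd q := by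
    rw [← Nat.div_div_self (Nat.gcd_dvd_left _ p) hN, h,
      Nat.div_div_self (Nat.gcd_dvd_left _ q) hN]
  rw [zpowers_pow_eq_zpowers_pow_gcd hz p, zpowers_pow_eq_zpowers_pow_gcd hz q, hgcd]

theorem zpowers_mk_le_zpowers_mk {A B : Type*} [Group A] [Group B] {b : A} {c c' : B}
    (hb : b ^ 2 = 1) (hc : ∃ k, orderOf c = 2 ^ k) (h : zpowers c = zpowers c') :
    zpowers (b, c') ≤ zpowers (b, c) := by
  obtain ⟨k, hk⟩ := hc
  have hfin : IsOfFinOrder c := orderOf_pos_iff.1 (hk ▸ pow_pos two_pos k)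
  obtain ⟨p, rfl⟩ := hfin.mem_powers_iff_mem_zpowers.2 (h ▸ mem_zpowers c')
  rw [zpowers_le]
  rcases k with _ | k
  · rw [pow_zero, orderOf_eq_one_iff] at hk
    simp [hk, mem_zpowers]
  · have hp : Odd p := by
      have := mem_zpowers_pow_iff.1 (h ▸ mem_zpowers c)
      rw [hk] at this
      exact Nat.coprime_two_right.1
        (Nat.Coprime.coprime_dvd_right (dvd_pow_self 2 k.succ_ne_zero) this)
    have hbp : b ^ p = b := by
      obtain ⟨t, rfl⟩ := hp
      rw [pow_succ, pow_mul, hb, one_pow, one_mul]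
    simpa [hbp] using pow_mem (mem_zpowers (b, c)) p

theorem zpowers_mk_eq_zpowers_mk {A B : Type*} [Group A] [Group B] {b : A} {c c' : B}
    (hb : b ^ 2 = 1) (hc : ∃ k, orderOf c = 2 ^ k) (h : zpowers c = zpowers c') :
    zpowers (b, c) = zpowers (b, c') := by
  have hc' : ∃ k, orderOf c' = 2 ^ k := by
    rwa [← Nat.card_zpowers, ← h, Nat.card_zpowers]
  exact le_antisymm (zpowers_mk_le_zpowers_mk hb hc' h.symm) (zpowers_mk_le_zpowers_mk hb hc h)

theorem card_orderOf_eq_le_mul_card_cyclic [Fintype G] (d : ℕ) :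
    #{g : G | orderOf g = d} ≤ d * Nat.card {H : Subgroup G // IsCyclic H} := by
  classical
  calc #{g : G | orderOf g = d}
      ≤ d * #(({g : G | orderOf g = d} : Finset G).image zpowers) := by
        refine Finset.card_le_mul_card_image _ d fun H hH ↦ ?_
        obtain ⟨g, hg, rfl⟩ := Finset.mem_image.1 hH
        rw [Finset.mem_filter] at hg
        calc #{x ∈ ({g : G | orderOf g = d} : Finset G) | zpowers x = zpowers g}
            ≤ #(zpowers g : Set G).toFinset := Finset.card_le_card fun x hx ↦ by
              rw [Finset.mem_filter] at hx
              simp [← hx.2, mem_zpowers]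
          _ = d := by
              rw [Set.toFinset_card, ← Nat.card_eq_fintype_card, SetLike.coe_sort_coe,
                Nat.card_zpowers, hg.2]
    _ ≤ d * Nat.card {H : Subgroup G // IsCyclic H} := by
        gcongr
        rw [← Set.ncard_coe_finset]
        refine Set.ncard_le_ncard (fun H hH ↦ ?_) (Set.toFinite _)
        obtain ⟨g, -, rfl⟩ := Finset.mem_image.1 hH
        exact Subgroup.isCyclic_zpowers g

end

theorem ZMod.two_mul_natCast_eq_zero (n : ℕ) : 2 * (n : ZMod (2 * n)) = 0 := by
  exact_mod_cast ZMod.natCast_self (2 * n)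

namespace QuaternionGroup

variable {n : ℕ}

theorem mem_zpowers_xa {i : ZMod (2 * n)} {u : QuaternionGroup n} (hu : u ∈ zpowers (xa i)) :
    (∃ s, u = a s ∧ 2 * s = 0) ∨ ∃ s, u = xa s ∧ 2 * (s - i) = 0 := by
  obtain ⟨k, rfl⟩ := mem_zpowers_iff.1 hu
  have h2n := ZMod.two_mul_natCast_eq_zero n
  rw [zpow_eq_zpow_emod' k (xa_pow_four i)]
  have hk0 := Int.emod_nonneg k (by norm_num : (4 : ℤ) ≠ 0)
  have hk4 := Int.emod_lt_of_pos k (by norm_num : (0 : ℤ) < 4)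
  interval_cases k % 4
  · exact Or.inl ⟨0, by simp⟩
  · exact Or.inr ⟨i, by simp⟩
  · exact Or.inl ⟨n, by simp [xa_sq], h2n⟩
  · refine Or.inr ⟨i - n, ?_, by linear_combination -h2n⟩
    rw [show (3 : ℤ) = (3 : ℕ) from rfl, zpow_natCast, pow_succ, xa_sq, a_mul_xa]

theorem four_mul_sub_eq_zero_of_permute {i j : ZMod (2 * n)}
    (h : (zpowers (xa i) : Set (QuaternionGroup n)) * zpowers (xa j) =
      zpowers (xa j) * zpowers (xa i)) :
    4 * (i - j) = 0 := by
  have h2n := ZMod.two_mul_natCast_eq_zero n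
  have hmem : xa i * xa j ∈ (zpowers (xa j) : Set (QuaternionGroup n)) * zpowers (xa i) :=
    h ▸ Set.mul_mem_mul (mem_zpowers _) (mem_zpowers _)
  obtain ⟨u, hu, v, hv, huv⟩ := hmem
  -- only `a s * a t` and `xa s * xa t` can equal `xa i * xa j = a (n + j - i)`
  rcases mem_zpowers_xa hu with ⟨s, rfl, hs⟩ | ⟨s, rfl, hs⟩ <;>
    rcases mem_zpowers_xa hv with ⟨t, rfl, ht⟩ | ⟨t, rfl, ht⟩ <;>
    simp only [a_mul_a, a_mul_xa, xa_mul_a, xa_mul_xa, reduceCtorEq, a.injEq] at huv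
  · linear_combination 4 * huv - 2 * hs - 2 * ht + 2 * h2n
  · linear_combination 2 * huv + hs - ht

theorem a_mem_zpowers_a_one [NeZero n] (i : ZMod (2 * n)) :
    a i ∈ zpowers (a 1 : QuaternionGroup n) := by
  simpa [a_one_pow] using pow_mem (mem_zpowers (a 1 : QuaternionGroup n)) i.val

theorem exists_eq_zpowers_mk_of_isCyclic {H : Subgroup (ℤ₂ × QuaternionGroup n)}
    (hH : IsCyclic H) :
    (∃ b i, H = zpowers (b, a i)) ∨ ∃ b i, H = zpowers (b, xa i) := by
  obtain ⟨⟨b, q⟩, rfl⟩ := H.isCyclic_iff_exists_zpowers_eq_top.1 hH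
  cases q with
  | a i => exact Or.inl ⟨b, i, rfl⟩
  | xa i => exact Or.inr ⟨b, i, rfl⟩

theorem ncard_zpowers_mk_a_le [NeZero n] {e : ℕ} (he : 2 * n = 2 ^ e) :
    {H : Subgroup (ℤ₂ × QuaternionGroup n) | ∃ b i, H = zpowers (b, a i)}.ncard ≤
      2 * (e + 1) := by
  have hsq : ∀ b : ℤ₂, b ^ 2 = 1 := by decide
  have hdvd : ∀ i : ZMod (2 * n), orderOf (a i) ∣ 2 ^ e := fun i ↦
    he ▸ orderOf_a_one (n := n) ▸ orderOf_dvd_of_mem_zpowers (a_mem_zpowers_a_one i)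
  let f (H : Subgroup (ℤ₂ × QuaternionGroup n)) : ℕ × ℕ :=
    (Nat.card (H.map (MonoidHom.fst _ _)), Nat.card (H.map (MonoidHom.snd _ _)))
  have hf (b : ℤ₂) (i : ZMod (2 * n)) : f (zpowers (b, a i)) = (orderOf b, orderOf (a i)) := by
    simp only [f, MonoidHom.map_zpowers, Nat.card_zpowers, MonoidHom.coe_fst, MonoidHom.coe_snd]
  calc _ ≤ (↑((2 : ℕ).divisors ×ˢ (2 ^ e).divisors) : Set (ℕ × ℕ)).ncard := by
        refine Set.ncard_le_ncard_of_injOn f ?_ ?_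
        · rintro _ ⟨b, i, rfl⟩
          simp [hf, orderOf_dvd_of_pow_eq_one (hsq b), hdvd i]
        · rintro _ ⟨b, i, rfl⟩ _ ⟨b', i', rfl⟩ h
          simp only [hf, Prod.mk.injEq] at h
          have hb : b = b' := by
            have key : ∀ x y : ℤ₂, (x = 1 ↔ y = 1) → x = y := by decide
            exact key b b' (by rw [← orderOf_eq_one_iff, h.1, orderOf_eq_one_iff])
          rw [hb]
          refine zpowers_mk_eq_zpowers_mk (hsq b')
            (((Nat.dvd_prime_pow Nat.prime_two).1 (hdvd i)).imp fun _ ↦ And.right) ?_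
          exact zpowers_eq_zpowers_of_orderOf_eq (isOfFinOrder_of_finite _)
            (a_mem_zpowers_a_one i) (a_mem_zpowers_a_one i') h.2
    _ = 2 * (e + 1) := by
        rw [Set.ncard_coe_finset, card_product, Nat.prime_two.divisors,
          Nat.divisors_prime_pow Nat.prime_two]
        simp

theorem four_mul_sub_eq_zero_of_permute_mk {b c : ℤ₂} {i j : ZMod (2 * n)}
    (h : (zpowers (b, xa i) : Set (ℤ₂ × QuaternionGroup n)) * zpowers (c, xa j) =
      zpowers (c, xa j) * zpowers (b, xa i)) :
    4 * (i - j) = 0 := by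
  apply four_mul_sub_eq_zero_of_permute
  have h' := congrArg (MonoidHom.snd ℤ₂ (QuaternionGroup n) '' ·) h
  have hsnd (x : ℤ₂ × QuaternionGroup n) :
      MonoidHom.snd ℤ₂ (QuaternionGroup n) '' (zpowers x : Set _) = zpowers x.2 := by
    rw [← Subgroup.coe_map, MonoidHom.map_zpowers, MonoidHom.coe_snd]
  simpa only [Set.image_mul, hsnd] using h'

theorem ncard_permuting_zpowers_mk_xa_le [NeZero n] (b : ℤ₂) (i : ZMod (2 * n)) :
    {K : Subgroup (ℤ₂ × QuaternionGroup n) | (∃ c j, K = zpowers (c, xa j)) ∧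
      (zpowers (b, xa i) : Set (ℤ₂ × QuaternionGroup n)) * K = K * zpowers (b, xa i)}.ncard ≤
      8 := by
  let T : Set (ZMod (2 * n)) := {t | 4 * t = 0}
  have hT : T.ncard ≤ 4 := by
    have := IsAddCyclic.card_nsmul_eq_zero_le (α := ZMod (2 * n)) (n := 4) (by norm_num)
    rw [← Set.ncard_coe_finset, coe_filter] at this
    simpa [T, nsmul_eq_mul] using this
  let f (p : ℤ₂ × ZMod (2 * n)) : Subgroup (ℤ₂ × QuaternionGroup n) := zpowers (p.1, xa (i - p.2))
  calc _ ≤ (f '' (Set.univ ×ˢ T)).ncard := by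
        refine Set.ncard_le_ncard ?_ (Set.toFinite _)
        rintro _ ⟨⟨c, j, rfl⟩, h⟩
        exact ⟨(c, i - j), ⟨trivial, four_mul_sub_eq_zero_of_permute_mk h⟩, by simp [f]⟩
    _ ≤ (Set.univ ×ˢ T).ncard := Set.ncard_image_le (Set.toFinite _)
    _ ≤ 8 := by
        rw [Set.ncard_prod, Set.ncard_univ, Nat.card_eq_fintype_card]
        exact (Nat.mul_le_mul_left _ hT).trans (by decide)

theorem le_card_cyclic_subgroups_prod [NeZero n] :
    n ≤ Nat.card {H : Subgroup (ℤ₂ × QuaternionGroup n) // IsCyclic H} := by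
  have horder (b : ℤ₂) (i : ZMod (2 * n)) : orderOf (b, xa i) = 4 := by
    rw [Prod.orderOf_mk, orderOf_xa, Nat.lcm_eq_right]
    have hb : b ^ 2 = 1 := by revert b; decide
    exact (orderOf_dvd_of_pow_eq_one hb).trans (by norm_num)
  have h4n : 4 * n ≤ #{g : ℤ₂ × QuaternionGroup n | orderOf g = 4} := by
    calc 4 * n = #(univ : Finset (ℤ₂ × ZMod (2 * n))) := by
          simp [Fintype.card_prod, ZMod.card]; ring
      _ ≤ _ := card_le_card_of_injOn (fun p ↦ (p.1, xa p.2))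
          (fun p _ ↦ by simp [horder]) (fun p _ q _ h ↦ by simpa [Prod.ext_iff] using h)
  have := card_orderOf_eq_le_mul_card_cyclic (G := ℤ₂ × QuaternionGroup n) 4
  omega

theorem card_permuting_cyclic_pairs_prod_le [NeZero n] {e : ℕ} (he : 2 * n = 2 ^ e) :
    Nat.card {p : Subgroup (ℤ₂ × QuaternionGroup n) × Subgroup (ℤ₂ × QuaternionGroup n) //
      IsCyclic p.1 ∧ IsCyclic p.2 ∧
        (p.1 : Set (ℤ₂ × QuaternionGroup n)) * p.2 = p.2 * p.1} ≤
      (4 * e + 12) * Nat.card {H : Subgroup (ℤ₂ × QuaternionGroup n) // IsCyclic H} := by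
  let P (H : Subgroup (ℤ₂ × QuaternionGroup n)) : Prop := ∃ b i, H = zpowers (b, a i)
  refine (Nat.card_rel_le_of_sparse (α := Subgroup _) (fun H ↦ IsCyclic H) P
    (fun H K ↦ (H : Set (ℤ₂ × QuaternionGroup n)) * K = K * H) 8 fun H hH hPH ↦ ?_).trans ?_
  · obtain ⟨b, i, rfl⟩ := (exists_eq_zpowers_mk_of_isCyclic hH).resolve_left hPH
    change Set.ncard {K | _} ≤ _
    refine (Set.ncard_le_ncard ?_ (Set.toFinite _)).trans (ncard_permuting_zpowers_mk_xa_le b i)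
    rintro K ⟨hK, hPK, hperm⟩
    exact ⟨(exists_eq_zpowers_mk_of_isCyclic hK).resolve_left hPK, hperm⟩
  · have hA : Nat.card {H : Subgroup (ℤ₂ × QuaternionGroup n) // IsCyclic H ∧ P H} ≤
        2 * (e + 1) :=
      (Set.ncard_le_ncard (fun H hH ↦ hH.2) (Set.toFinite _)).trans (ncard_zpowers_mk_a_le he)
    exact Nat.mul_le_mul_right _ (by omega)

end QuaternionGroup

theorem cyclicPermutingPairs_le {m : ℕ} (hm : 1 ≤ m) :
    cyclicPermutingPairs m ≤ 16 * m * numCyclicSubgroups m := by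
  refine (card_permuting_cyclic_pairs_prod_le (e := m) ?_).trans ?_
  · rw [← pow_succ', Nat.sub_add_cancel hm]
  · unfold numCyclicSubgroups; gcongr; omega

theorem two_pow_pred_le_numCyclicSubgroups (m : ℕ) : 2 ^ (m - 1) ≤ numCyclicSubgroups m :=
  le_card_cyclic_subgroups_prod

/-- The cyclic subgroup commutativity degree of `ℤ₂ × Q_{2^{m+1}}` tends to `0` as `m → ∞`. -/
theorem csd_Z2_prod_quaternion_tendsto_zero :
    Filter.Tendsto
      (fun m : ℕ => (cyclicPermutingPairs m : ℝ) / (numCyclicSubgroups m : ℝ) ^ 2)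
      Filter.atTop (nhds 0) := by
  have hlim := (tendsto_pow_const_div_const_pow_of_one_lt 1 one_lt_two).const_mul (32 : ℝ)
  rw [mul_zero] at hlim
  refine squeeze_zero' (.of_forall fun m ↦ by positivity)
    (Filter.eventually_atTop.2 ⟨1, fun m hm ↦ ?_⟩) hlim
  have hN : (cyclicPermutingPairs m : ℝ) ≤ 16 * m * numCyclicSubgroups m := by
    exact_mod_cast cyclicPermutingPairs_le hm
  have hT : (2 : ℝ) ^ m ≤ 2 * numCyclicSubgroups m := by
    rw [← Nat.sub_add_cancel hm, pow_succ']
    exact_mod_cast Nat.mul_le_mul_left 2 (two_pow_pred_le_numCyclicSubgroups m)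
  have hT0 : (0 : ℝ) < numCyclicSubgroups m := by linarith [pow_pos (two_pos (α := ℝ)) m]
  calc (cyclicPermutingPairs m : ℝ) / (numCyclicSubgroups m : ℝ) ^ 2
      ≤ 16 * m * numCyclicSubgroups m / (numCyclicSubgroups m : ℝ) ^ 2 := by gcongr
    _ = 32 * m / (2 * numCyclicSubgroups m : ℝ) := by field_simp; ring
    _ ≤ 32 * ((m : ℝ) ^ 1 / 2 ^ m) := by rw [pow_one, ← mul_div_assoc]; gcongr
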